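/- Within a run of the PBWT, forward stepping preserves offsets: if [p,q] is an interval of rows with PBWT_j[p] = PBWT_j[p+1] = ⋯ = PBWT_j[q], then for every p ≤ i ≤ q, fore[i][j] = fore[p][j] + (i − p). -/

import Mathlib

namespace PBWT

/-- The reversed prefix of length `j` (truncated at `w`) of haplotype `i`:
used to express the co-lexicographic order of prefixes. -/
def revPrefix {h w : ℕ} (S : Fin h → Fin w → ℕ) (j : ℕ) (i : Fin h) : List ℕ :=
  ((List.range j).filterMap (fun t => if ht : t < w then some (S i ⟨t, ht⟩) else none)).reverse

/-- `PA` is the stable sort of the haplotype indices by the co-lexicographic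
order of their prefixes of length `j` (ties broken by original index). -/
def IsStableSort {h w : ℕ} (S : Fin h → Fin w → ℕ) (j : ℕ) (PA : Fin h ≃ Fin h) : Prop :=
  ∀ a b : Fin h, a < b →
    List.Lex (· < ·) (revPrefix S j (PA a)) (revPrefix S j (PA b)) ∨
      (revPrefix S j (PA a) = revPrefix S j (PA b) ∧ (PA a).val < (PA b).val)

/-- Number of maximal runs of equal adjacent values in the sequence `f`. -/
def runCount {α : Type*} [DecidableEq α] {n : ℕ} (f : Fin n → α) : ℕ :=
  ((List.ofFn f).destutter (· ≠ ·)).length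

/-- `h''`: the number of indices `i` with `S i ≠ S (i+1)`. -/
noncomputable def adjDiff {h w : ℕ} (S : Fin h → Fin w → ℕ) : ℕ :=
  Nat.card {i : Fin h // ∃ h1 : (i : ℕ) + 1 < h, S i ≠ S ⟨(i : ℕ) + 1, h1⟩}


/- Going from column `j` to column `j + 1` is one step of a radix sort: `PA_{j+1}` orders the
haplotypes by their `j`-th character first and by their `PA_j`-rank second. Two haplotypes that are
adjacent in `PA_j` and share that character therefore stay adjacent, since anything sorted strictly
between them in `PA_{j+1}` must carry the same character and then lies strictly between them in
`PA_j` as well. Forward stepping thus maps a run onto consecutive rows. -/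

section RadixStep

variable {n : ℕ} {β γ : Type*}

lemma lt_iff_symm_lt_of_strictMono [Preorder β] {e : Fin n ≃ Fin n} {k : Fin n → β}
    (he : StrictMono (k ∘ e)) {x y : Fin n} : k x < k y ↔ e.symm x < e.symm y := by
  simpa using he.lt_iff_lt (a := e.symm x) (b := e.symm y)

lemma fore_succ_of_eq [LinearOrder β] [LinearOrder γ] {e₁ e₂ : Fin n ≃ Fin n}
    {k : Fin n → β} {c : Fin n → γ} (h₁ : StrictMono (k ∘ e₁))
    (h₂ : StrictMono ((fun x => toLex (c x, k x)) ∘ e₂)) {t t' : Fin n}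
    (hsucc : (t' : ℕ) = t + 1) (hc : c (e₁ t) = c (e₁ t')) :
    (e₂.symm (e₁ t') : ℕ) = e₂.symm (e₁ t) + 1 := by
  have hk : k (e₁ t) < k (e₁ t') := h₁ (Fin.lt_def.mpr (by omega))
  have hlt : e₂.symm (e₁ t) < e₂.symm (e₁ t') :=
    (lt_iff_symm_lt_of_strictMono h₂).1 (Prod.Lex.toLex_lt_toLex.2 (.inr ⟨hc, hk⟩))
  by_contra hne
  have hm : (e₂.symm (e₁ t) : ℕ) + 1 < e₂.symm (e₁ t') := by
    have := Fin.lt_def.mp hlt; omega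
  set y := e₂ ⟨_, hm.trans (e₂.symm (e₁ t')).isLt⟩
  have hy₁ : toLex (c (e₁ t), k (e₁ t)) < toLex (c y, k y) := by
    rw [lt_iff_symm_lt_of_strictMono h₂, Fin.lt_def]
    simp [y]
  have hy₂ : toLex (c y, k y) < toLex (c (e₁ t'), k (e₁ t')) := by
    rw [lt_iff_symm_lt_of_strictMono h₂, Fin.lt_def]
    simpa [y] using hm
  have hcy : c y = c (e₁ t) :=
    le_antisymm (hc ▸ Prod.Lex.monotone_fst _ _ hy₂.le) (Prod.Lex.monotone_fst _ _ hy₁.le)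
  have hb₁ : t < e₁.symm y := by
    simpa using (lt_iff_symm_lt_of_strictMono h₁).1
      ((Prod.Lex.toLex_lt_toLex.1 hy₁).resolve_left hcy.symm.not_lt |>.2)
  have hb₂ : e₁.symm y < t' := by
    simpa using (lt_iff_symm_lt_of_strictMono h₁).1
      ((Prod.Lex.toLex_lt_toLex.1 hy₂).resolve_left (hcy.trans hc).not_lt |>.2)
  have := Fin.lt_def.mp hb₁
  have := Fin.lt_def.mp hb₂
  omega

end RadixStep

lemma eq_add_sub_of_forall_succ {n : ℕ} {f : Fin n → ℕ} {p q : Fin n}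
    (hf : ∀ t t' : Fin n, p ≤ t → t' ≤ q → (t' : ℕ) = t + 1 → f t' = f t + 1) :
    ∀ i : Fin n, p ≤ i → i ≤ q → f i = f p + (i - p) := by
  suffices ∀ k : ℕ, ∀ i : Fin n, (i : ℕ) = p + k → i ≤ q → f i = f p + k by
    intro i hpi hiq
    exact this _ i (by rw [Fin.le_def] at hpi; omega) hiq
  intro k
  induction k with
  | zero => intro i hi _; simp [Fin.ext hi]
  | succ k ih =>
    intro i hi hiq
    have ht : (p : ℕ) + k < n := by omega
    rw [hf ⟨_, ht⟩ i (Fin.le_def.mpr (by simp)) hiq (by simp; omega),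
      ih ⟨_, ht⟩ rfl (Fin.le_def.mpr (by rw [Fin.le_def] at hiq; simp only; omega))]
    rfl

section SortKey

variable {h w : ℕ} (S : Fin h → Fin w → ℕ)

def sortKey (j : ℕ) (x : Fin h) : List ℕ ×ₗ ℕ :=
  toLex (revPrefix S j x, x.val)

lemma revPrefix_succ {j : ℕ} (hj : j < w) (x : Fin h) :
    revPrefix S (j + 1) x = S x ⟨j, hj⟩ :: revPrefix S j x := by
  simp [revPrefix, List.range_succ, List.filterMap_append, hj]

lemma sortKey_succ_lt_iff {j : ℕ} (hj : j < w) {x y : Fin h} :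
    sortKey S (j + 1) x < sortKey S (j + 1) y ↔
      toLex (S x ⟨j, hj⟩, sortKey S j x) < toLex (S y ⟨j, hj⟩, sortKey S j y) := by
  simp only [sortKey, Prod.Lex.toLex_lt_toLex, revPrefix_succ S hj, List.cons_lt_cons_iff,
    List.cons.injEq]
  tauto

variable {S}

lemma IsStableSort.strictMono {j : ℕ} {PA : Fin h ≃ Fin h} (hPA : IsStableSort S j PA) :
    StrictMono (sortKey S j ∘ PA) := fun a b hab =>
  Prod.Lex.toLex_lt_toLex.2 (hPA a b hab)

lemma IsStableSort.strictMono_succ {j : ℕ} (hj : j < w) {PA : Fin h ≃ Fin h}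
    (hPA : IsStableSort S (j + 1) PA) :
    StrictMono ((fun x => toLex (S x ⟨j, hj⟩, sortKey S j x)) ∘ PA) := fun _ _ hab =>
  (sortKey_succ_lt_iff S hj).1 (hPA.strictMono hab)

end SortKey

theorem stmt15_general (h w : ℕ) (S : Fin h → Fin w → ℕ) (j : ℕ) (hj : j < w)
    (PA1 PA2 : Fin h ≃ Fin h)
    (hPA1 : IsStableSort S j PA1) (hPA2 : IsStableSort S (j + 1) PA2)
    (p q : Fin h)
    (hconst : ∀ t : Fin h, p ≤ t → t ≤ q → S (PA1 t) ⟨j, hj⟩ = S (PA1 p) ⟨j, hj⟩) :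
    ∀ i : Fin h, p ≤ i → i ≤ q →
      (PA2.symm (PA1 i)).val = (PA2.symm (PA1 p)).val + ((i : ℕ) - (p : ℕ)) := by
  refine eq_add_sub_of_forall_succ fun t t' hpt ht'q hsucc => ?_
  have htt' : t ≤ t' := Fin.le_def.mpr (by omega)
  exact fore_succ_of_eq hPA1.strictMono (hPA2.strictMono_succ hj) hsucc
    ((hconst t hpt (htt'.trans ht'q)).trans (hconst t' (hpt.trans htt') ht'q).symm)

theorem stmt15 (h w : ℕ) (S : Fin h → Fin w → ℕ) (j : ℕ) (hj : j < w)
    (PA1 PA2 : Fin h ≃ Fin h)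
    (hPA1 : IsStableSort S j PA1) (hPA2 : IsStableSort S (j + 1) PA2)
    (p q : Fin h) (hpq : p ≤ q)
    (hconst : ∀ t : Fin h, p ≤ t → t ≤ q → S (PA1 t) ⟨j, hj⟩ = S (PA1 p) ⟨j, hj⟩) :
    ∀ i : Fin h, p ≤ i → i ≤ q →
      (PA2.symm (PA1 i)).val = (PA2.symm (PA1 p)).val + ((i : ℕ) - (p : ℕ)) :=
  stmt15_general h w S j hj PA1 PA2 hPA1 hPA2 p q hconst

end PBWT
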